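/- Matching-calls property of message histories: for any reachable state, in every prefix of the recorded message history, the number of callback-return messages never exceeds the number of callback-invoke messages (i.e., histories are prefix-balanced like a Dyck prefix). -/
import Mathlib

inductive Msg : Type
  | cbInvoke
  | cbReturn
  | ciInvoke
deriving DecidableEq

inductive Step {St : Type} (appStep : St → St → Prop) :
    (List Msg × List Unit × St) → (List Msg × List Unit × St) → Prop
  | cbInvoke {ω : List Msg} {κ : List Unit} {s s' : St} :
      Step appStep (ω, κ, s) (ω ++ [.cbInvoke], () :: κ, s')
  | cbReturn {ω : List Msg} {κ : List Unit} {a : Unit} {s s' : St} :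
      Step appStep (ω, a :: κ, s) (ω ++ [.cbReturn], κ, s')
  | ciInvoke {ω : List Msg} {κ : List Unit} {s s' : St} :
      Step appStep (ω, κ, s) (ω ++ [.ciInvoke], κ, s')
  | app {ω : List Msg} {κ : List Unit} {s s' : St} :
      appStep s s' → Step appStep (ω, κ, s) (ω, κ, s')

def Reachable {St : Type} (appStep : St → St → Prop) (s0 : St)
    (σ : List Msg × List Unit × St) : Prop :=
  Relation.ReflTransGen (Step appStep) (([] : List Msg), ([] : List Unit), s0) σ

def MsgInv (σ : List Msg × List Unit × St) : Prop :=
  (σ.1.count Msg.cbReturn + σ.2.1.length = σ.1.count Msg.cbInvoke) ∧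
  ∀ p : List Msg, p <+: σ.1 → p.count Msg.cbReturn ≤ p.count Msg.cbInvoke

lemma prefix_snoc {α : Type} [DecidableEq α] {p ω : List α} {m : α}
    (h : p <+: ω ++ [m]) : p <+: ω ∨ p = ω ++ [m] := by
  rcases h with ⟨t, ht⟩
  rcases t.eq_nil_or_concat with rfl | ⟨t', b, rfl⟩
  · right; simpa using ht
  · left
    have := congrArg List.dropLast ht
    simp at this
    exact ⟨t', this⟩

lemma inv_step {St : Type} {appStep : St → St → Prop}
    {ω ω' : List Msg} {κ κ' : List Unit} {s s' : St}
    (hs : Step appStep (ω, κ, s) (ω', κ', s')) (h : MsgInv (ω, κ, s)) :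
    MsgInv (ω', κ', s') := by
  obtain ⟨h1, h2⟩ := h
  simp only [MsgInv] at h1 h2 ⊢
  cases hs with
  | cbInvoke =>
    refine ⟨by simp [List.count_append]; omega, ?_⟩
    intro p hp
    rcases prefix_snoc hp with hp | rfl
    · exact h2 p hp
    · simp [List.count_append]
      exact (h2 _ (List.prefix_refl _)).trans (by omega)
  | cbReturn =>
    refine ⟨by simp [List.count_append] at *; omega, ?_⟩
    intro p hp
    rcases prefix_snoc hp with hp | rfl
    · exact h2 p hp
    · simp only [List.length_cons] at h1; simp [List.count_append]; omega
  | ciInvoke =>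
    refine ⟨by simp [List.count_append]; omega, ?_⟩
    intro p hp
    rcases prefix_snoc hp with hp | rfl
    · exact h2 p hp
    · simp [List.count_append]
      exact h2 _ (List.prefix_refl _)
  | app _ => exact ⟨h1, h2⟩

lemma inv_reachable {St : Type} {appStep : St → St → Prop} {s0 : St}
    {σ : List Msg × List Unit × St} (h : Reachable appStep s0 σ) : MsgInv σ := by
  induction h with
  | refl => exact ⟨by simp, by intro p hp; simp [List.prefix_nil.mp hp]⟩
  | @tail b c _ hs ih =>
    obtain ⟨ω1, κ1, s1⟩ := b
    obtain ⟨ω2, κ2, s2⟩ := c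
    exact inv_step hs ih

/-- Matching-calls (Dyck-prefix) property: in every prefix of the history of
a reachable state, callback returns never exceed callback invokes. -/
theorem prefix_balanced {St : Type} (appStep : St → St → Prop)
    (s0 : St) (ω : List Msg) (κ : List Unit) (s : St)
    (h : Reachable appStep s0 (ω, κ, s)) :
    ∀ p : List Msg, p <+: ω → p.count Msg.cbReturn ≤ p.count Msg.cbInvoke := by
  exact (inv_reachable h).2
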